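/- arXiv:0901.4814 — 4 statements merged into one kernel-verified Lean document; each statement's English description precedes it below -/
import Mathlib

section
/- Perfect secrecy of Shamir's scheme for k-1 shares: fix a prime p, a secret s : ZMod p, and k-1 distinct nonzero evaluation points x₁,…,x_{k-1} in ZMod p. The map sending a coefficient vector (a₁,…,a_{k-1}) ∈ (ZMod p)^{k-1} to the share vector (f.eval x₁, …, f.eval x_{k-1}), where f(X) = s + Σ aⱼ X^j, is a bijection from (ZMod p)^{k-1} to (ZMod p)^{k-1}. -/
/-!
The share map is an affine map `a ↦ s + M a` with `M i j = x i ^ (j + 1)`. Pulling the factor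
`x i` out of row `i` turns `M` into the Vandermonde matrix of `x`, so `det M = (∏ i, x i) · ∏_{i<j} (x j - x i)`,
which is nonzero for distinct nonzero points over the field `ZMod p`.
-/

open Function Matrix

theorem Matrix.det_of_pow_succ {R : Type*} [CommRing R] {n : ℕ} (v : Fin n → R) :
    (of fun i j : Fin n => v i ^ ((j : ℕ) + 1)).det = (∏ i, v i) * (vandermonde v).det := by
  rw [← det_mul_column]
  congr 1
  ext i j
  simp [pow_succ', vandermonde]

theorem Matrix.det_of_pow_succ_ne_zero {R : Type*} [CommRing R] [IsDomain R] {n : ℕ}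
    {v : Fin n → R} (hv : Injective v) (hv0 : ∀ i, v i ≠ 0) :
    (of fun i j : Fin n => v i ^ ((j : ℕ) + 1)).det ≠ 0 := by
  rw [det_of_pow_succ]
  exact mul_ne_zero (Finset.prod_ne_zero_iff.2 fun i _ => hv0 i)
    (det_vandermonde_ne_zero_iff.2 hv)

theorem bijective_add_sum_mul_pow_succ {K : Type*} [Field K] {n : ℕ} {x : Fin n → K}
    (hx : Injective x) (hx0 : ∀ i, x i ≠ 0) (s : K) :
    Bijective fun (a : Fin n → K) (i : Fin n) => s + ∑ j : Fin n, a j * x i ^ ((j : ℕ) + 1) := by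
  set M : Matrix (Fin n) (Fin n) K := of fun i j => x i ^ ((j : ℕ) + 1)
  have hM : IsUnit M := (isUnit_iff_isUnit_det M).2 (det_of_pow_succ_ne_zero hx hx0).isUnit
  have hshares : (fun (a : Fin n → K) (i : Fin n) => s + ∑ j, a j * x i ^ ((j : ℕ) + 1))
      = (fun v => (fun _ => s) + v) ∘ M.mulVec := by
    ext a i
    simp [M, mulVec, dotProduct, mul_comm]
  rw [hshares]
  exact (Equiv.addLeft _).bijective.comp
    ⟨mulVec_injective_iff_isUnit.2 hM, mulVec_surjective_iff_isUnit.2 hM⟩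

theorem shamir_share_map_bijective (p k : ℕ) (hp : p.Prime)
    (x : Fin (k - 1) → ZMod p) (hx : Function.Injective x) (hx0 : ∀ i, x i ≠ 0)
    (s : ZMod p) :
    Function.Bijective
      (fun a : Fin (k - 1) → ZMod p =>
        fun i : Fin (k - 1) => s + ∑ j : Fin (k - 1), a j * (x i) ^ ((j : ℕ) + 1)) := by
  have : Fact p.Prime := ⟨hp⟩
  exact bijective_add_sum_mul_pow_succ hx hx0 s
end

section
/- Consequently, for uniformly random coefficients, any fixed collection of k-1 Shamir shares is uniformly distributed and independent of the secret: for any two secrets s, s' : ZMod p and any target share vector y ∈ (ZMod p)^{k-1}, the number of coefficient vectors a ∈ (ZMod p)^{k-1} producing share vector y under secret s equals the number producing y under secret s'. -/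
/-!
Changing the secret from `s'` to `s` shifts every share by `s - s'`. The matrix `(x i ^ (j + 1))`
is a Vandermonde matrix times `diag x`, hence invertible for distinct nonzero nodes, so this shift
is realised by translating the coefficient vector by a fixed `c`; `a ↦ a + c` is then a bijection
between the two solution sets.
-/

open Matrix

theorem Matrix.of_pow_succ_eq_transpose_vandermonde_mul_diagonal {R : Type*} [CommRing R]
    {n : ℕ} (v : Fin n → R) :
    Matrix.of (fun j i : Fin n => v i ^ ((j : ℕ) + 1)) = (vandermonde v)ᵀ * diagonal v := by
  ext j i
  simp [vandermonde_apply, pow_succ]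

theorem Matrix.isUnit_of_pow_succ {K : Type*} [Field K] {n : ℕ} {v : Fin n → K}
    (hv : Function.Injective v) (hv0 : ∀ i, v i ≠ 0) :
    IsUnit (Matrix.of fun j i : Fin n => v i ^ ((j : ℕ) + 1)) := by
  rw [isUnit_iff_isUnit_det, of_pow_succ_eq_transpose_vandermonde_mul_diagonal, det_mul,
    det_transpose, det_diagonal, isUnit_iff_ne_zero]
  exact mul_ne_zero (det_vandermonde_ne_zero_iff.2 hv) (Finset.prod_ne_zero_iff.2 fun i _ => hv0 i)

theorem AddMonoidHom.card_add_apply_eq_of_sub_mem_range {G H : Type*} [AddGroup G]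
    [AddCommGroup H] (f : G →+ H) {u u' : H} (h : u - u' ∈ f.range) (y : H) :
    Nat.card {a : G // u + f a = y} = Nat.card {a : G // u' + f a = y} := by
  obtain ⟨c, hc⟩ := h
  refine Nat.card_congr (Equiv.subtypeEquiv (Equiv.addRight c) fun a => ?_)
  rw [Equiv.coe_addRight, map_add, hc, show u' + (f a + (u - u')) = u + f a by abel]

theorem shamir_perfect_secrecy (p k : ℕ) (hp : p.Prime)
    (x : Fin (k - 1) → ZMod p) (hx : Function.Injective x) (hx0 : ∀ i, x i ≠ 0)
    (s s' : ZMod p) (y : Fin (k - 1) → ZMod p) :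
    Nat.card {a : Fin (k - 1) → ZMod p //
        ∀ i, s + ∑ j : Fin (k - 1), a j * (x i) ^ ((j : ℕ) + 1) = y i} =
    Nat.card {a : Fin (k - 1) → ZMod p //
        ∀ i, s' + ∑ j : Fin (k - 1), a j * (x i) ^ ((j : ℕ) + 1) = y i} := by
  have : Fact p.Prime := ⟨hp⟩
  let N : Matrix (Fin (k - 1)) (Fin (k - 1)) (ZMod p) := .of fun j i => x i ^ ((j : ℕ) + 1)
  have hN : Function.Surjective N.vecMulLinear :=
    vecMul_surjective_iff_isUnit.2 (isUnit_of_pow_succ hx hx0)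
  have shares_eq (t : ZMod p) (a : Fin (k - 1) → ZMod p) :
      (∀ i, t + ∑ j, a j * x i ^ ((j : ℕ) + 1) = y i) ↔ (fun _ => t) + N.vecMulLinear a = y :=
    funext_iff.symm
  simp only [shares_eq]
  exact N.vecMulLinear.toAddMonoidHom.card_add_apply_eq_of_sub_mem_range (hN _) y
end

section
/- Full correctness of the recursive (k,n) scheme: define polynomials p₁,…,p_{k-1} recursively as in Algorithm 2 from secrets s₁,…,s_{k-1} ∈ ZMod p and a random a₁ ∈ ZMod p, with n < p and k ≤ n. Then from any k of the final shares (i, p_{k-1}.eval i), i ∈ {1,…,n}, the reconstruction phase recovers all secrets: the interpolant of the k shares equals p_{k-1}, its constant term is s_{k-1}, and iterating coefficient-extraction-then-interpolation recovers s_{k-2}, …, s₁. -/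
/-!
Each step of the recursion only adds monomials of degree at most `i`, so `p_{k-1}` has degree
less than `k`; it is therefore the Lagrange interpolant of its values at any `k` points of
`{1, …, n}`, and these points stay distinct in `ZMod p` because `n < p`. The coefficient
identities are read off the recursion directly.
-/

open Polynomial

/-- The recursive dealer polynomials of Algorithm 2: `shamirRec p a₁ s 1 = a₁ X + s 1`,
and `p_i = s_i + ∑_{m=1}^{i} (p_{i-1}.eval m) X^m`. -/
noncomputable def shamirRec (p : ℕ) (a₁ : ZMod p) (s : ℕ → ZMod p) : ℕ → Polynomial (ZMod p)
  | 0 => C (s 0)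
  | 1 => C a₁ * X + C (s 1)
  | (i + 2) => C (s (i + 2)) +
      ∑ m ∈ Finset.Icc 1 (i + 2), C ((shamirRec p a₁ s (i + 1)).eval (m : ZMod p)) * X ^ m

open Finset

theorem Lagrange.interpolate_natCast_eval {F : Type*} [Field F] (p : ℕ) [CharP F p]
    {S : Finset ℕ} (hS : ∀ m ∈ S, m < p) {f : F[X]} (hf : f.degree < #S) :
    Lagrange.interpolate S (fun m => (m : F)) (fun m => f.eval (m : F)) = f :=
  (Lagrange.eq_interpolate ((CharP.natCast_injOn_Iio F p).mono hS) hf).symm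

namespace shamirRec

variable {p : ℕ} (a₁ : ZMod p) (s : ℕ → ZMod p)

theorem eq_add_sum (i : ℕ) :
    shamirRec p a₁ s (i + 2) = C (s (i + 2)) +
      ∑ m ∈ Icc 1 (i + 2), monomial m ((shamirRec p a₁ s (i + 1)).eval (m : ZMod p)) := by
  simp only [shamirRec, C_mul_X_pow_eq_monomial]

theorem natDegree_le : ∀ i, (shamirRec p a₁ s i).natDegree ≤ i
  | 0 => (natDegree_C _).le
  | 1 => natDegree_linear_le
  | i + 2 => by
    rw [eq_add_sum]
    refine natDegree_add_le_of_degree_le (by simp) (natDegree_sum_le_of_forall_le _ _ ?_)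
    intro m hm
    exact (natDegree_monomial_le _).trans (mem_Icc.1 hm).2

theorem degree_le (i : ℕ) : (shamirRec p a₁ s i).degree ≤ i :=
  degree_le_of_natDegree_le (natDegree_le a₁ s i)

theorem coeff_zero : ∀ i, (shamirRec p a₁ s i).coeff 0 = s i
  | 0 => coeff_C_zero
  | 1 => by simp [shamirRec]
  | i + 2 => by
    rw [eq_add_sum, coeff_add, coeff_C_zero, finsetSum_coeff, sum_eq_zero, add_zero]
    intro m hm
    exact coeff_monomial_of_ne _ (Nat.one_le_iff_ne_zero.1 (mem_Icc.1 hm).1).symm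

theorem coeff_of_mem_Icc (i : ℕ) : ∀ m ∈ Icc 1 (i + 2),
    (shamirRec p a₁ s (i + 2)).coeff m = (shamirRec p a₁ s (i + 1)).eval (m : ZMod p) := by
  intro m hm
  rw [eq_add_sum, coeff_add, coeff_C, if_neg (Nat.one_le_iff_ne_zero.1 (mem_Icc.1 hm).1),
    zero_add, finsetSum_coeff]
  simp_rw [coeff_monomial]
  rw [sum_ite_eq', if_pos hm]

end shamirRec

theorem recursive_scheme_correct_general (p n k : ℕ) [hp : Fact p.Prime] (hk : 2 ≤ k)
    (hnp : n < p) (a₁ : ZMod p) (s : ℕ → ZMod p) :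
    (∀ S : Finset ℕ, S ⊆ Finset.Icc 1 n → S.card = k →
      Lagrange.interpolate S (fun m => (m : ZMod p))
        (fun m => (shamirRec p a₁ s (k - 1)).eval (m : ZMod p)) = shamirRec p a₁ s (k - 1)) ∧
    ((shamirRec p a₁ s 1).coeff 0 = s 1) ∧
    (∀ i, 2 ≤ i → i ≤ k - 1 →
      (shamirRec p a₁ s i).coeff 0 = s i ∧
      ∀ m ∈ Finset.Icc 1 i,
        (shamirRec p a₁ s i).coeff m = (shamirRec p a₁ s (i - 1)).eval (m : ZMod p)) := by
  refine ⟨fun S hSn hSk => ?_, shamirRec.coeff_zero a₁ s 1, fun i hi _ => ?_⟩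
  · refine Lagrange.interpolate_natCast_eval p (fun m hm => (mem_Icc.1 (hSn hm)).2.trans_lt hnp) ?_
    refine (shamirRec.degree_le a₁ s (k - 1)).trans_lt ?_
    rw [hSk]
    exact_mod_cast Nat.sub_lt (by omega) one_pos
  · obtain ⟨j, rfl⟩ : ∃ j, i = j + 2 := ⟨i - 2, by omega⟩
    exact ⟨shamirRec.coeff_zero a₁ s _, shamirRec.coeff_of_mem_Icc a₁ s j⟩

theorem recursive_scheme_correct (p n k : ℕ) [hp : Fact p.Prime] (hk : 2 ≤ k) (hkn : k ≤ n)
    (hnp : n < p) (a₁ : ZMod p) (s : ℕ → ZMod p) :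
    (∀ S : Finset ℕ, S ⊆ Finset.Icc 1 n → S.card = k →
      Lagrange.interpolate S (fun m => (m : ZMod p))
        (fun m => (shamirRec p a₁ s (k - 1)).eval (m : ZMod p)) = shamirRec p a₁ s (k - 1)) ∧
    ((shamirRec p a₁ s 1).coeff 0 = s 1) ∧
    (∀ i, 2 ≤ i → i ≤ k - 1 →
      (shamirRec p a₁ s i).coeff 0 = s i ∧
      ∀ m ∈ Finset.Icc 1 i,
        (shamirRec p a₁ s i).coeff m = (shamirRec p a₁ s (i - 1)).eval (m : ZMod p)) :=
  recursive_scheme_correct_general p n k (hp := hp) hk hnp a₁ s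
end

section
/- The share-generation map of the full recursive scheme is injective in the secrets: with evaluation points 1,…,n distinct in ZMod p (n < p), the map sending (a₁, s₁, …, s_{k-1}) to the n final shares (p_{k-1}.eval 1, …, p_{k-1}.eval n) is injective, where p_{k-1} is built by the recursion of Algorithm 2. -/
open Polynomial

/-!
The coefficients of `p_{i+1}` are `s_{i+1}` (constant term) and the values of `p_i` at
`1, …, i+1`. Since `deg p_i ≤ i` and these `i+1` points are distinct in `ZMod p`,
interpolation recovers `p_i` from `p_{i+1}`, and `p_1 = a₁ X + s₁` recovers `a₁, s₁`.
Likewise the `n ≥ k` shares determine `p_{k-1}`, which has degree at most `k - 1`.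
-/

theorem Polynomial.eq_of_natDegree_lt_card_of_eval_natCast_eq {R : Type*} [CommRing R]
    [IsDomain R] (p : ℕ) [CharP R p] {f g : R[X]} {S : Finset ℕ} (hSp : ∀ m ∈ S, m < p)
    (hcard : max f.natDegree g.natDegree < S.card)
    (h : ∀ m ∈ S, f.eval (m : R) = g.eval (m : R)) : f = g := by
  classical
  have hinj : Set.InjOn ((↑) : ℕ → R) S := (CharP.natCast_injOn_Iio R p).mono hSp
  refine eq_of_natDegree_lt_card_of_eval_eq' f g (S.image (↑)) ?_ ?_
  · simpa using h
  · rwa [Finset.card_image_of_injOn hinj]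

section shamirRec

variable {p : ℕ} (a : ZMod p) (s : ℕ → ZMod p)

theorem natDegree_shamirRec_le : ∀ i, (shamirRec p a s i).natDegree ≤ i
  | 0 => by simp [shamirRec]
  | 1 => by simp only [shamirRec]; compute_degree
  | i + 2 => by
    simp only [shamirRec]
    refine natDegree_add_le_of_degree_le (by simp) (natDegree_sum_le_of_forall_le _ _ ?_)
    intro m hm
    exact (natDegree_C_mul_X_pow_le _ _).trans (Finset.mem_Icc.mp hm).2

theorem coeff_shamirRec_add_two (i m : ℕ) :
    (shamirRec p a s (i + 2)).coeff m =
      (if m = 0 then s (i + 2) else 0) +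
        if m ∈ Finset.Icc 1 (i + 2) then (shamirRec p a s (i + 1)).eval (m : ZMod p) else 0 := by
  simp [shamirRec, coeff_C]

theorem shamirRec_eq_and_eq_of_shamirRec_add_one_eq [Fact p.Prime] {a' : ZMod p}
    {s' : ℕ → ZMod p} {i : ℕ} (hi : 1 ≤ i) (hip : i + 1 < p)
    (h : shamirRec p a s (i + 1) = shamirRec p a' s' (i + 1)) :
    shamirRec p a s i = shamirRec p a' s' i ∧ s (i + 1) = s' (i + 1) := by
  obtain ⟨i, rfl⟩ := Nat.exists_eq_add_of_le' hi
  have hcoeff := fun m => congrArg (coeff · m) h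
  simp only [coeff_shamirRec_add_two] at hcoeff
  refine ⟨eq_of_natDegree_lt_card_of_eval_natCast_eq p (S := Finset.Icc 1 (i + 2))
    (fun m hm => ?_) ?_ (fun m hm => ?_), by simpa using hcoeff 0⟩
  · exact (Finset.mem_Icc.mp hm).2.trans_lt hip
  · simpa [Nat.lt_succ_iff] using
      ⟨natDegree_shamirRec_le a s _, natDegree_shamirRec_le a' s' _⟩
  · simpa [hm, Nat.one_le_iff_ne_zero.mp (Finset.mem_Icc.mp hm).1] using hcoeff m

theorem eq_and_eqOn_of_shamirRec_eq [Fact p.Prime] {a' : ZMod p} {s' : ℕ → ZMod p} {i : ℕ}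
    (hi : 1 ≤ i) (hip : i < p) (h : shamirRec p a s i = shamirRec p a' s' i) :
    a = a' ∧ ∀ j ∈ Finset.Icc 1 i, s j = s' j := by
  induction i, hi using Nat.le_induction with
  | base =>
    have hcoeff := fun m => congrArg (coeff · m) h
    refine ⟨by simpa [shamirRec] using hcoeff 1, fun j hj => ?_⟩
    obtain rfl : j = 1 := by simpa using hj
    simpa [shamirRec] using hcoeff 0
  | succ i hi ih =>
    obtain ⟨hprev, hlast⟩ := shamirRec_eq_and_eq_of_shamirRec_add_one_eq a s hi hip h
    obtain ⟨ha, hs⟩ := ih (by omega) hprev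
    refine ⟨ha, fun j hj => ?_⟩
    rcases (Finset.mem_Icc.mp hj).2.lt_or_eq with hlt | rfl
    · exact hs j (Finset.mem_Icc.mpr ⟨(Finset.mem_Icc.mp hj).1, Nat.lt_succ_iff.mp hlt⟩)
    · exact hlast

end shamirRec

theorem share_map_injective (p n k : ℕ) (hp : p.Prime) (hk : 2 ≤ k) (hkn : k ≤ n)
    (hnp : n < p) :
    Function.Injective
      (fun v : ZMod p × (Fin (k - 1) → ZMod p) =>
        fun i : Fin n =>
          (shamirRec p v.1
              (fun j => if h : j - 1 < k - 1 then v.2 ⟨j - 1, h⟩ else 0) (k - 1)).eval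
            (((i : ℕ) + 1 : ZMod p))) := by
  have : Fact p.Prime := ⟨hp⟩
  intro v w h
  set s : ℕ → ZMod p := fun j => if h : j - 1 < k - 1 then v.2 ⟨j - 1, h⟩ else 0
  set s' : ℕ → ZMod p := fun j => if h : j - 1 < k - 1 then w.2 ⟨j - 1, h⟩ else 0
  have hpoly : shamirRec p v.1 s (k - 1) = shamirRec p w.1 s' (k - 1) := by
    refine eq_of_natDegree_lt_card_of_eval_natCast_eq p (S := Finset.Icc 1 n)
      (fun m hm => ?_) ?_ (fun m hm => ?_)
    · exact (Finset.mem_Icc.mp hm).2.trans_lt hnp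
    · simpa using ⟨(natDegree_shamirRec_le v.1 s _).trans_lt (by omega),
        (natDegree_shamirRec_le w.1 s' _).trans_lt (by omega)⟩
    · obtain ⟨hm1, hmn⟩ := Finset.mem_Icc.mp hm
      obtain ⟨m, rfl⟩ : ∃ m', m = m' + 1 := ⟨m - 1, by omega⟩
      exact_mod_cast congrFun h ⟨m, by omega⟩
  obtain ⟨ha, hs⟩ := eq_and_eqOn_of_shamirRec_eq v.1 s (by omega) (by omega) hpoly
  refine Prod.ext ha (funext fun j => ?_)
  have := hs (j + 1) (Finset.mem_Icc.mpr ⟨by omega, by omega⟩)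
  simpa [s, s', dif_pos j.isLt] using this
end
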